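/- Let m ≥ 2 and h ≥ 2, and let T(m,h) be the complete m-ary tree of height h. Then for every vertex v of depth d with 2 ≤ d ≤ h, Gain(T(m,h), μ1, Z(v)) > m^h, and moreover m^h > Gain(T(m,h), μ1, Z(root)) = m^{h+1}(m^h−1)/(m^{h+2}−m^{h+1}+m^h−1). -/

import Mathlib

/-- The competitive-diffusion payoff of Player 1 with starting vertex `x` against
starting vertex `y`: the number of vertices strictly closer to `x` than to `y`. -/
noncomputable def gain {V : Type*} (G : SimpleGraph V) (x y : V) : ℕ :=
  {u : V | G.dist u x < G.dist u y}.ncard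

/-- The expected gain of Player 1 playing mixed strategy `X` against mixed strategy `Y`. -/
noncomputable def Gain {V : Type*} (G : SimpleGraph V) [Fintype V] (X Y : V → ℝ) : ℝ :=
  ∑ x : V, ∑ y : V, X x * Y y * (gain G x y : ℝ)

/-- The pure strategy `Z(v)` concentrated on vertex `v`. -/
def pureStrat {V : Type*} [DecidableEq V] (v : V) : V → ℝ := fun u => if u = v then 1 else 0

/-- Vertices of the complete `m`-ary tree of height `h`: lists over `Fin m` of length
at most `h`; the length of the list is the depth of the vertex. -/
def TreeVert (m h : ℕ) := {l : List (Fin m) // l.length ≤ h}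

noncomputable instance (m h : ℕ) : Fintype (TreeVert m h) :=
  (List.finite_length_le (Fin m) h).fintype

instance (m h : ℕ) : DecidableEq (TreeVert m h) := Subtype.instDecidableEq

instance (m h : ℕ) : Nonempty (TreeVert m h) := ⟨⟨[], by simp⟩⟩

/-- The complete `m`-ary tree of height `h`: each vertex of depth `< h` has exactly
`m` children, obtained by prepending an element of `Fin m`. -/
def CompleteTree (m h : ℕ) : SimpleGraph (TreeVert m h) :=
  SimpleGraph.fromRel (fun x y => x.1 = y.1.tail ∧ y.1.length = x.1.length + 1)

/-- The root of the complete `m`-ary tree. -/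
def root (m h : ℕ) : TreeVert m h := ⟨[], by simp⟩

noncomputable def alpha1 (m h : ℕ) : ℝ :=
  ((m : ℝ) ^ h - 1) / ((m : ℝ) ^ (h + 2) - (m : ℝ) ^ (h + 1) + (m : ℝ) ^ h - 1)

noncomputable def beta1 (m h : ℕ) : ℝ :=
  ((m : ℝ) - 1) * (m : ℝ) ^ h / ((m : ℝ) ^ (h + 2) - (m : ℝ) ^ (h + 1) + (m : ℝ) ^ h - 1)

noncomputable def alpha2 (m h : ℕ) : ℝ :=
  ((m : ℝ) - 1) * ((m : ℝ) ^ (h + 1) - (m : ℝ) ^ h + 1) /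
    ((m : ℝ) ^ (h + 2) - (m : ℝ) ^ (h + 1) + (m : ℝ) ^ h - 1)

noncomputable def beta2 (m h : ℕ) : ℝ :=
  ((m : ℝ) ^ h - 1) / ((m : ℝ) ^ (h + 2) - (m : ℝ) ^ (h + 1) + (m : ℝ) ^ h - 1)

/-- The mixed strategy `μ₁`: probability `α₁` on the root, `β₁` on each depth-1 vertex. -/
noncomputable def mu1 (m h : ℕ) : TreeVert m h → ℝ := fun v =>
  if v.1.length = 0 then alpha1 m h else if v.1.length = 1 then beta1 m h else 0

/-- The mixed strategy `μ₂`: probability `α₂` on the root, `β₂` on each depth-1 vertex. -/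
noncomputable def mu2 (m h : ℕ) : TreeVert m h → ℝ := fun v =>
  if v.1.length = 0 then alpha2 m h else if v.1.length = 1 then beta2 m h else 0

/-!
A vertex is the word of child indices read from the vertex up to the root, so the ancestors of
`u` are its suffixes and `dist u x = |u| + |x| - 2 c`, where `c` is the length of the longest common
suffix of `u` and `x`.

Against a vertex `v` of depth at least `2`, the root and every depth-1 vertex win all vertices
outside the subtree of the depth-1 ancestor of `v`, which are `m^h` many; that ancestor itself
even wins everything outside the subtree of the depth-2 ancestor, `m^h + m^(h-1)` vertices.
Since `α₁ + m β₁ = 1`, the expected gain is at least `m^h + β₁ m^(h-1) > m^h`. Against the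
root, the root wins nothing and a depth-1 vertex wins exactly its own subtree of
`(m^h - 1)/(m - 1)` vertices, which gives the closed form; comparing it with `m^h` reduces to
`m^h (m-1)^2 + (m-1) > 0`.
-/

theorem SimpleGraph.Walk.sub_le_length {V : Type*} {G : SimpleGraph V} (f : V → ℤ)
    (hf : ∀ a b, G.Adj a b → f a ≤ f b + 1) {u v : V} (p : G.Walk u v) :
    f u - f v ≤ p.length := by
  induction p with
  | nil => simp
  | cons hadj p ih =>
    have := hf _ _ hadj
    rw [SimpleGraph.Walk.length_cons]
    push_cast
    omega

theorem SimpleGraph.Reachable.sub_le_dist {V : Type*} {G : SimpleGraph V} (f : V → ℤ)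
    (hf : ∀ a b, G.Adj a b → f a ≤ f b + 1) {u v : V} (huv : G.Reachable u v) :
    f u - f v ≤ G.dist u v := by
  obtain ⟨p, hp⟩ := huv.exists_walk_length_eq_dist
  exact hp ▸ p.sub_le_length f hf

section Gain

variable {V : Type*} (G : SimpleGraph V)

theorem gain_self (x : V) : gain G x x = 0 := by
  simp [gain]

theorem card_sub_ncard_le_gain [Finite V] {x y : V} (A : Set V)
    (hA : ∀ u ∉ A, G.dist u x < G.dist u y) : Nat.card V - A.ncard ≤ gain G x y := by
  rw [← Set.ncard_compl]
  exact Set.ncard_le_ncard fun u hu => hA u hu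

theorem Gain_pureStrat [Fintype V] [DecidableEq V] (X : V → ℝ) (v : V) :
    Gain G X (pureStrat v) = ∑ x, X x * gain G x v := by
  simp [Gain, pureStrat]

end Gain

section CommonSuffix

variable {α : Type*}

open Classical in
noncomputable def commonSuffixLength (u v : List α) : ℕ :=
  Nat.findGreatest (fun k => ∃ s : List α, k ≤ s.length ∧ s <:+ u ∧ s <:+ v) u.length

open Classical in
theorem le_commonSuffixLength_iff {k : ℕ} {u v : List α} :
    k ≤ commonSuffixLength u v ↔ ∃ s : List α, k ≤ s.length ∧ s <:+ u ∧ s <:+ v := by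
  unfold commonSuffixLength
  constructor
  · intro hk
    obtain ⟨s, hs, hsu, hsv⟩ :=
      Nat.findGreatest_spec (P := fun k => ∃ s : List α, k ≤ s.length ∧ s <:+ u ∧ s <:+ v)
        (Nat.zero_le _) ⟨[], le_rfl, List.nil_suffix, List.nil_suffix⟩
    exact ⟨s, hk.trans hs, hsu, hsv⟩
  · rintro ⟨s, hks, hsu, hsv⟩
    exact Nat.le_findGreatest (hks.trans hsu.length_le) ⟨s, hks, hsu, hsv⟩

variable {u v s : List α}

theorem length_le_commonSuffixLength (hu : s <:+ u) (hv : s <:+ v) :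
    s.length ≤ commonSuffixLength u v :=
  le_commonSuffixLength_iff.2 ⟨s, le_rfl, hu, hv⟩

theorem exists_suffix_length_eq_commonSuffixLength :
    ∃ s : List α, s.length = commonSuffixLength u v ∧ s <:+ u ∧ s <:+ v := by
  obtain ⟨s, hs, hsu, hsv⟩ := le_commonSuffixLength_iff.1 (le_refl (commonSuffixLength u v))
  exact ⟨s, le_antisymm (length_le_commonSuffixLength hsu hsv) hs, hsu, hsv⟩

theorem commonSuffixLength_le_left : commonSuffixLength u v ≤ u.length := by
  obtain ⟨s, hs, hsu, -⟩ := exists_suffix_length_eq_commonSuffixLength (u := u) (v := v)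
  exact hs ▸ hsu.length_le

theorem commonSuffixLength_le_right : commonSuffixLength u v ≤ v.length := by
  obtain ⟨s, hs, -, hsv⟩ := exists_suffix_length_eq_commonSuffixLength (u := u) (v := v)
  exact hs ▸ hsv.length_le

theorem commonSuffixLength_self : commonSuffixLength u u = u.length :=
  le_antisymm commonSuffixLength_le_left
    (length_le_commonSuffixLength (List.suffix_refl u) (List.suffix_refl u))

theorem drop_suffix_of_le_commonSuffixLength {k : ℕ} (hk : k ≤ commonSuffixLength u v) :
    v.drop (v.length - k) <:+ u := by
  obtain ⟨s, hks, hsu, hsv⟩ := le_commonSuffixLength_iff.1 hk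
  refine (List.suffix_of_suffix_length_le (List.drop_suffix _ _) hsv ?_).trans hsu
  simp only [List.length_drop]
  omega

theorem commonSuffixLength_le_cons (a : α) :
    commonSuffixLength u v ≤ commonSuffixLength (a :: u) v := by
  obtain ⟨s, hs, hsu, hsv⟩ := exists_suffix_length_eq_commonSuffixLength (u := u) (v := v)
  exact hs ▸ length_le_commonSuffixLength (hsu.trans (List.suffix_cons a u)) hsv

theorem commonSuffixLength_cons_le (a : α) :
    commonSuffixLength (a :: u) v ≤ commonSuffixLength u v + 1 := by
  obtain ⟨s, hs, hsu, hsv⟩ := exists_suffix_length_eq_commonSuffixLength (u := a :: u) (v := v)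
  rcases List.suffix_cons_iff.1 hsu with rfl | hsu
  · have := length_le_commonSuffixLength (List.suffix_refl u) ((List.suffix_cons a u).trans hsv)
    simp only [List.length_cons] at hs
    omega
  · have := length_le_commonSuffixLength hsu hsv
    omega

end CommonSuffix

namespace CompleteTree

variable {m h : ℕ}

theorem adj_iff {x y : TreeVert m h} :
    (CompleteTree m h).Adj x y ↔ (∃ a, y.1 = a :: x.1) ∨ ∃ a, x.1 = a :: y.1 := by
  have parent_iff : ∀ {x y : List (Fin m)},
      (x = y.tail ∧ y.length = x.length + 1) ↔ ∃ a, y = a :: x := by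
    intro x y
    cases y <;> simp +contextual [eq_comm]
  rw [CompleteTree, SimpleGraph.fromRel_adj, parent_iff, parent_iff]
  refine ⟨And.right, fun hxy => ⟨?_, hxy⟩⟩
  rintro rfl
  rcases hxy with ⟨a, ha⟩ | ⟨a, ha⟩ <;> exact List.cons_ne_self a x.1 ha.symm

theorem exists_walk_of_suffix {u s : TreeVert m h} (hs : s.1 <:+ u.1) :
    ∃ p : (CompleteTree m h).Walk u s, p.length = u.1.length - s.1.length := by
  obtain ⟨t, ht⟩ := hs
  induction t generalizing u with
  | nil =>
    obtain rfl : u = s := Subtype.ext ht.symm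
    exact ⟨.nil, by simp⟩
  | cons a t ih =>
    let u' : TreeVert m h := ⟨t ++ s.1, by
      have := u.2
      rw [← ht] at this
      simp only [List.length_append, List.length_cons] at this ⊢
      omega⟩
    have hadj : (CompleteTree m h).Adj u u' := adj_iff.2 (.inr ⟨a, ht.symm⟩)
    obtain ⟨p, hp⟩ := ih (u := u') rfl
    refine ⟨.cons hadj p, ?_⟩
    rw [SimpleGraph.Walk.length_cons, hp, ← ht]
    simp [u']
    omega

theorem dist_add_two_mul_commonSuffixLength (u x : TreeVert m h) :
    (CompleteTree m h).dist u x + 2 * commonSuffixLength u.1 x.1 =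
      u.1.length + x.1.length := by
  obtain ⟨s, hs, hsu, hsx⟩ := exists_suffix_length_eq_commonSuffixLength (u := u.1) (v := x.1)
  let s' : TreeVert m h := ⟨s, hsu.length_le.trans u.2⟩
  obtain ⟨p, hp⟩ := exists_walk_of_suffix (s := s') hsu
  obtain ⟨q, hq⟩ := exists_walk_of_suffix (s := s') hsx
  have hupper := SimpleGraph.dist_le (p.append q.reverse)
  -- `|y| - 2 c(y, x)` changes by exactly one along every edge
  have hlower := (p.append q.reverse).reachable.sub_le_dist
    (fun y => y.1.length - 2 * (commonSuffixLength y.1 x.1 : ℤ)) (by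
      intro a b hab
      rcases adj_iff.1 hab with ⟨c, hc⟩ | ⟨c, hc⟩
      · have := commonSuffixLength_le_cons c (u := a.1) (v := x.1)
        have := commonSuffixLength_cons_le c (u := a.1) (v := x.1)
        simp only [hc, List.length_cons]
        push_cast
        omega
      · have := commonSuffixLength_le_cons c (u := b.1) (v := x.1)
        have := commonSuffixLength_cons_le c (u := b.1) (v := x.1)
        simp only [hc, List.length_cons]
        push_cast
        omega)
  have := commonSuffixLength_le_left (u := u.1) (v := x.1)
  have := commonSuffixLength_le_right (u := u.1) (v := x.1)
  have hs' : s'.1.length = commonSuffixLength u.1 x.1 := hs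
  simp only [SimpleGraph.Walk.length_append, SimpleGraph.Walk.length_reverse, hp, hq] at hupper
  simp only [commonSuffixLength_self] at hlower
  omega

def equivSigmaVector (m k : ℕ) : TreeVert m k ≃ Σ i : Fin (k + 1), List.Vector (Fin m) i where
  toFun u := ⟨⟨u.1.length, Nat.lt_succ_of_le u.2⟩, ⟨u.1, rfl⟩⟩
  invFun p := ⟨p.2.1, by rw [p.2.2]; exact Nat.lt_succ_iff.1 p.1.2⟩
  left_inv _ := rfl
  right_inv := by
    rintro ⟨⟨i, hi⟩, l, hl⟩
    dsimp at hl
    subst hl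
    rfl

theorem card_treeVert (m k : ℕ) :
    Nat.card (TreeVert m k) = ∑ i ∈ Finset.range (k + 1), m ^ i := by
  rw [Nat.card_congr (equivSigmaVector m k), Nat.card_eq_fintype_card, Fintype.card_sigma]
  simp only [card_vector, Fintype.card_fin]
  exact Fin.sum_univ_eq_sum_range (m ^ ·) (k + 1)

theorem card_treeVert_succ (m k : ℕ) :
    Nat.card (TreeVert m (k + 1)) = Nat.card (TreeVert m k) + m ^ (k + 1) := by
  rw [card_treeVert, card_treeVert, Finset.sum_range_succ]

def subtreeEquiv (s : List (Fin m)) (hs : s.length ≤ h) :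
    {u : TreeVert m h // s <:+ u.1} ≃ TreeVert m (h - s.length) where
  toFun u := ⟨u.1.1.take (u.1.1.length - s.length), by have := u.1.2; simp; omega⟩
  invFun t := ⟨⟨t.1 ++ s, by have := t.2; simp; omega⟩, List.suffix_append _ _⟩
  left_inv u := by
    obtain ⟨t, ht⟩ := u.2
    apply Subtype.ext; apply Subtype.ext
    simp [← ht]
  right_inv t := Subtype.ext (by simp)

theorem ncard_setOf_suffix (s : List (Fin m)) (hs : s.length ≤ h) :
    {u : TreeVert m h | s <:+ u.1}.ncard = Nat.card (TreeVert m (h - s.length)) := by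
  rw [← Nat.card_coe_set_eq]
  exact Nat.card_congr (subtreeEquiv s hs)

theorem card_sub_card_le_gain {x v : TreeVert m h} (s : List (Fin m)) (hs : s.length ≤ h)
    (hclose : ∀ u : TreeVert m h, ¬ s <:+ u.1 →
      (CompleteTree m h).dist u x < (CompleteTree m h).dist u v) :
    Nat.card (TreeVert m h) - Nat.card (TreeVert m (h - s.length)) ≤
      gain (CompleteTree m h) x v := by
  rw [← ncard_setOf_suffix s hs]
  exact card_sub_ncard_le_gain _ _ hclose

theorem pow_le_gain_of_length_le_one {x v : TreeVert m h} (hx : x.1.length ≤ 1)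
    (hv : 2 ≤ v.1.length) : m ^ h ≤ gain (CompleteTree m h) x v := by
  obtain ⟨k, rfl⟩ : ∃ k, h = k + 1 := ⟨h - 1, by have := v.2; omega⟩
  have hgain := card_sub_card_le_gain (x := x) (v := v) (v.1.drop (v.1.length - 1))
    (by simp; omega) (fun u hu => by
      have hmeet : commonSuffixLength u.1 v.1 = 0 := by
        by_contra hne
        exact hu (drop_suffix_of_le_commonSuffixLength (Nat.one_le_iff_ne_zero.2 hne))
      have := dist_add_two_mul_commonSuffixLength u x
      have := dist_add_two_mul_commonSuffixLength u v
      omega)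
  rw [card_treeVert_succ] at hgain
  simpa [show v.1.length - (v.1.length - 1) = 1 by omega] using hgain

theorem pow_add_pow_le_gain_of_suffix {x v : TreeVert m h} (hx : x.1.length = 1)
    (hxv : x.1 <:+ v.1) (hv : 2 ≤ v.1.length) :
    m ^ h + m ^ (h - 1) ≤ gain (CompleteTree m h) x v := by
  obtain ⟨k, rfl⟩ : ∃ k, h = k + 2 := ⟨h - 2, by have := v.2; omega⟩
  have hgain := card_sub_card_le_gain (x := x) (v := v) (v.1.drop (v.1.length - 2))
    (by simp; omega) (fun u hu => by
      have hmeet : commonSuffixLength u.1 v.1 < 2 :=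
        lt_of_not_ge fun h2 => hu (drop_suffix_of_le_commonSuffixLength h2)
      have hmeet_x : 1 ≤ commonSuffixLength u.1 v.1 → 1 ≤ commonSuffixLength u.1 x.1 := by
        intro h1
        have hxu : x.1 <:+ u.1 := by
          rw [List.suffix_iff_eq_drop.1 hxv, hx]
          exact drop_suffix_of_le_commonSuffixLength h1
        exact hx ▸ length_le_commonSuffixLength hxu (List.suffix_refl _)
      have := dist_add_two_mul_commonSuffixLength u x
      have := dist_add_two_mul_commonSuffixLength u v
      have := commonSuffixLength_le_right (u := u.1) (v := x.1)
      omega)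
  rw [card_treeVert_succ, card_treeVert_succ] at hgain
  simp only [List.length_drop, show v.1.length - (v.1.length - 2) = 2 by omega,
    Nat.add_sub_cancel, show k + 2 - 1 = k + 1 by omega, show k + 1 + 1 = k + 2 from rfl]
    at hgain ⊢
  omega

theorem gain_root_of_length_eq_one (x : TreeVert m h) (hx : x.1.length = 1) :
    gain (CompleteTree m h) x (root m h) = Nat.card (TreeVert m (h - 1)) := by
  rw [← hx, ← ncard_setOf_suffix x.1 x.2, gain]
  congr 1
  ext u
  have hroot := dist_add_two_mul_commonSuffixLength u (root m h)
  have := commonSuffixLength_le_right (u := u.1) (v := (root m h).1)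
  have hux := dist_add_two_mul_commonSuffixLength u x
  have := commonSuffixLength_le_right (u := u.1) (v := x.1)
  have hsuffix : x.1 <:+ u.1 ↔ 1 ≤ commonSuffixLength u.1 x.1 :=
    ⟨fun hxu => hx ▸ length_le_commonSuffixLength hxu (List.suffix_refl _),
      fun h1 => by simpa [hx] using drop_suffix_of_le_commonSuffixLength h1⟩
  have : (root m h).1.length = 0 := rfl
  simp only [Set.mem_ofPred_eq, hsuffix]
  omega

def depthOne (hh : 1 ≤ h) : Fin m ↪ TreeVert m h :=
  ⟨fun a => ⟨[a], by simpa using hh⟩,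
    fun a b hab => by simpa using congrArg Subtype.val hab⟩

theorem depthOne_val (hh : 1 ≤ h) (a : Fin m) : (depthOne hh a).1 = [a] := rfl

theorem sum_mu1_mul (hh : 1 ≤ h) (f : TreeVert m h → ℝ) :
    ∑ x, mu1 m h x * f x =
      alpha1 m h * f (root m h) + beta1 m h * ∑ a, f (depthOne hh a) := by
  have hroot : root m h ∉ Finset.univ.map (depthOne hh) := by
    intro hmem
    obtain ⟨a, -, ha⟩ := Finset.mem_map.1 hmem
    exact List.cons_ne_nil a [] (congrArg Subtype.val ha)
  rw [← Finset.sum_subset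
      (Finset.subset_univ (insert (root m h) (Finset.univ.map (depthOne hh)))),
    Finset.sum_insert hroot, Finset.sum_map, Finset.mul_sum]
  · simp [mu1, root, depthOne_val]
  · rintro ⟨l, hl⟩ - hx
    rcases l with _ | ⟨a, _ | ⟨b, l⟩⟩
    · exact absurd (Finset.mem_insert_self _ _) hx
    · exact absurd (Finset.mem_insert_of_mem (Finset.mem_map_of_mem _ (Finset.mem_univ a))) hx
    · simp [mu1]

theorem card_treeVert_mul_sub_one (m k : ℕ) :
    (Nat.card (TreeVert m k) : ℝ) * (m - 1) = (m : ℝ) ^ (k + 1) - 1 := by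
  rw [card_treeVert]
  push_cast
  exact geom_sum_mul _ _

theorem mu1_denom_pos (hm : 2 ≤ m) :
    0 < (m : ℝ) ^ (h + 2) - (m : ℝ) ^ (h + 1) + (m : ℝ) ^ h - 1 := by
  have hm' : (2 : ℝ) ≤ m := by exact_mod_cast hm
  have : (1 : ℝ) ≤ (m : ℝ) ^ h := one_le_pow₀ (by linarith)
  rw [pow_succ, pow_succ]
  nlinarith [mul_le_mul_of_nonneg_right this (by nlinarith : (0 : ℝ) ≤ m * m - m + 1)]

theorem alpha1_add_mul_beta1 (hm : 2 ≤ m) : alpha1 m h + m * beta1 m h = 1 := by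
  rw [alpha1, beta1, mul_div_assoc', ← add_div, div_eq_one_iff_eq (mu1_denom_pos hm).ne']
  ring

theorem alpha1_nonneg (hm : 2 ≤ m) : 0 ≤ alpha1 m h := by
  have : (1 : ℝ) ≤ (m : ℝ) ^ h := one_le_pow₀ (by exact_mod_cast (by omega : 1 ≤ m))
  exact div_nonneg (by linarith) (mu1_denom_pos hm).le

theorem beta1_pos (hm : 2 ≤ m) : 0 < beta1 m h := by
  have : (2 : ℝ) ≤ m := by exact_mod_cast hm
  exact div_pos (mul_pos (by linarith) (by positivity)) (mu1_denom_pos hm)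

theorem pow_lt_Gain_mu1_pureStrat (hm : 2 ≤ m) (v : TreeVert m h) (hv : 2 ≤ v.1.length) :
    (m : ℝ) ^ h < Gain (CompleteTree m h) (mu1 m h) (pureStrat v) := by
  have hh : 1 ≤ h := by have := v.2; omega
  have hne : v.1 ≠ [] := List.ne_nil_of_length_pos (by omega)
  set a₀ := v.1.getLast hne
  have hsum : m * m ^ h + m ^ (h - 1) ≤ ∑ a, gain (CompleteTree m h) (depthOne hh a) v :=
    calc m * m ^ h + m ^ (h - 1) = ∑ a, (m ^ h + if a = a₀ then m ^ (h - 1) else 0) := by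
          simp [Finset.sum_add_distrib]
      _ ≤ _ := Finset.sum_le_sum fun a _ => by
        split_ifs with ha
        · exact pow_add_pow_le_gain_of_suffix rfl
            ⟨v.1.dropLast, ha ▸ List.dropLast_append_getLast hne⟩ hv
        · exact pow_le_gain_of_length_le_one (x := depthOne hh a) le_rfl hv
  have hroot := pow_le_gain_of_length_le_one (x := root m h) (Nat.zero_le 1) hv
  rw [Gain_pureStrat, sum_mu1_mul hh]
  calc (m : ℝ) ^ h < m ^ h + beta1 m h * m ^ (h - 1) := by
        have := pow_pos (by positivity : (0 : ℝ) < m) (h - 1)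
        have := mul_pos (beta1_pos (h := h) hm) this
        linarith
    _ = alpha1 m h * m ^ h + beta1 m h * (m * m ^ h + m ^ (h - 1)) := by
        linear_combination (-(m : ℝ) ^ h) * alpha1_add_mul_beta1 (h := h) hm
    _ ≤ _ := by
        gcongr
        · exact alpha1_nonneg hm
        · exact_mod_cast hroot
        · exact (beta1_pos hm).le
        · exact_mod_cast hsum

theorem Gain_mu1_pureStrat_root (hh : 1 ≤ h) :
    Gain (CompleteTree m h) (mu1 m h) (pureStrat (root m h)) =
      (m : ℝ) ^ (h + 1) * ((m : ℝ) ^ h - 1) /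
        ((m : ℝ) ^ (h + 2) - (m : ℝ) ^ (h + 1) + (m : ℝ) ^ h - 1) := by
  have hcard := card_treeVert_mul_sub_one m (h - 1)
  rw [Nat.sub_add_cancel hh] at hcard
  have hgain (a : Fin m) :
      gain (CompleteTree m h) (depthOne hh a) (root m h) = Nat.card (TreeVert m (h - 1)) :=
    gain_root_of_length_eq_one _ rfl
  rw [Gain_pureStrat, sum_mu1_mul hh, gain_self]
  simp only [hgain, Finset.sum_const, Finset.card_univ,
    Fintype.card_fin, nsmul_eq_mul, Nat.cast_zero, mul_zero, zero_add, beta1]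
  rw [div_mul_eq_mul_div, pow_succ, ← hcard]
  ring

theorem Gain_mu1_pureStrat_root_lt (hm : 2 ≤ m) (hh : 1 ≤ h) :
    Gain (CompleteTree m h) (mu1 m h) (pureStrat (root m h)) < (m : ℝ) ^ h := by
  have hm' : (2 : ℝ) ≤ m := by exact_mod_cast hm
  rw [Gain_mu1_pureStrat_root hh, div_lt_iff₀ (mu1_denom_pos hm), pow_succ, pow_succ]
  have : 0 < (m : ℝ) ^ h * ((m : ℝ) ^ h * (m - 1) ^ 2 + (m - 1)) := by
    have : 0 < (m : ℝ) - 1 := by linarith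
    positivity
  linear_combination this

end CompleteTree

/-- On the complete `m`-ary tree of height `h ≥ 2`, for every vertex `v` of depth
`2 ≤ d ≤ h`, `Gain(T, μ₁, Z(v)) > m^h`; moreover
`m^h > Gain(T, μ₁, Z(root)) = m^{h+1}(m^h-1)/(m^{h+2}-m^{h+1}+m^h-1)`. -/
theorem stmt_16 (m h : ℕ) (hm : 2 ≤ m) (hh : 2 ≤ h) :
    (∀ v : TreeVert m h, 2 ≤ v.1.length →
      ((m : ℝ) ^ h < Gain (CompleteTree m h) (mu1 m h) (pureStrat v))) ∧
    Gain (CompleteTree m h) (mu1 m h) (pureStrat (root m h)) < (m : ℝ) ^ h ∧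
    Gain (CompleteTree m h) (mu1 m h) (pureStrat (root m h)) =
      (m : ℝ) ^ (h + 1) * ((m : ℝ) ^ h - 1) /
        ((m : ℝ) ^ (h + 2) - (m : ℝ) ^ (h + 1) + (m : ℝ) ^ h - 1) :=
  ⟨CompleteTree.pow_lt_Gain_mu1_pureStrat hm,
    CompleteTree.Gain_mu1_pureStrat_root_lt hm (by omega),
    CompleteTree.Gain_mu1_pureStrat_root (by omega)⟩
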